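/- arXiv:0710.5209 — 2 statements merged into one kernel-verified Lean document; each statement's English description precedes it below -/
import Mathlib

section
/- Let N ≥ 3 be an integer and let r, s be positive integers with r + s ≤ N - 1. Then the integral over the unit interval satisfies ∫₀¹ t^{r-1} (1 - t^N)^{s/N - 1} dt = Γ(r/N) Γ(s/N) / (N · Γ((r+s)/N)), i.e. the integral equals B(r/N, s/N)/N where B is the Beta function. -/
/-!
The substitution `u = t ^ N` turns the integral into `1/N` times Euler's Beta integral
`∫₀¹ u^(a-1) (1-u)^(b-1) du = Γ(a) Γ(b) / Γ(a+b)` with `a = r/N`, `b = s/N`.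
-/

open MeasureTheory Real Set

theorem integral_Ioo_zero_one_comp_rpow {E : Type*} [NormedAddCommGroup E] [NormedSpace ℝ E]
    (g : ℝ → E) {p : ℝ} (hp : 0 < p) :
    ∫ t in Ioo 0 1, (p * t ^ (p - 1)) • g (t ^ p) = ∫ u in Ioo 0 1, g u := by
  have hmono : StrictMonoOn (· ^ p) (Ici (0 : ℝ)) := strictMonoOn_rpow_Ici_of_exponent_pos hp
  have himage : (· ^ p) '' Ioo 0 1 = Ioo (0 : ℝ) 1 := by
    simpa [zero_rpow hp.ne'] using
      (continuous_rpow_const hp.le).continuousOn.image_Ioo_of_strictMonoOn zero_le_one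
        (hmono.mono Icc_subset_Ici_self)
  have hderiv : ∀ t ∈ Ioo (0 : ℝ) 1,
      HasDerivWithinAt (· ^ p) (p * t ^ (p - 1)) (Ioo 0 1) t := fun t ht =>
    (hasDerivAt_rpow_const (Or.inl ht.1.ne')).hasDerivWithinAt
  conv_rhs => rw [← himage, integral_image_eq_integral_abs_deriv_smul measurableSet_Ioo hderiv
    (hmono.injOn.mono (Ioo_subset_Ioi_self.trans Ioi_subset_Ici_self))]
  refine setIntegral_congr_fun measurableSet_Ioo fun t ht => ?_
  rw [abs_of_pos (by have := ht.1; positivity)]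

theorem integral_rpow_mul_one_sub_rpow_eq_beta {a b : ℝ} (ha : 0 < a) (hb : 0 < b) :
    ∫ x in (0 : ℝ)..1, x ^ (a - 1) * (1 - x) ^ (b - 1) = ProbabilityTheory.beta a b := by
  rw [ProbabilityTheory.beta_eq_betaIntegralReal a b ha hb, Complex.betaIntegral,
    intervalIntegral.integral_congr
      (g := fun x : ℝ => ((x ^ (a - 1) * (1 - x) ^ (b - 1) : ℝ) : ℂ)),
    intervalIntegral.integral_ofReal, Complex.ofReal_re]
  intro x hx
  rw [uIcc_of_le zero_le_one] at hx
  simp only [Complex.ofReal_mul, Complex.ofReal_cpow hx.1, Complex.ofReal_cpow (sub_nonneg.2 hx.2)]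
  push_cast
  rfl

theorem integral_rpow_mul_one_sub_rpow_rpow_eq_beta_div {p a b : ℝ} (hp : 0 < p) (ha : 0 < a)
    (hb : 0 < b) :
    ∫ t in (0 : ℝ)..1, t ^ (p * a - 1) * (1 - t ^ p) ^ (b - 1) =
      ProbabilityTheory.beta a b / p := by
  have hintegrand : ∀ t ∈ Ioo (0 : ℝ) 1, t ^ (p * a - 1) * (1 - t ^ p) ^ (b - 1) =
      p⁻¹ * ((p * t ^ (p - 1)) • ((t ^ p) ^ (a - 1) * (1 - t ^ p) ^ (b - 1))) := by
    intro t ht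
    rw [← rpow_mul ht.1.le, smul_eq_mul, ← mul_assoc, ← mul_assoc, inv_mul_cancel_left₀ hp.ne',
      ← rpow_add ht.1]
    ring_nf
  rw [intervalIntegral.integral_of_le zero_le_one, integral_Ioc_eq_integral_Ioo,
    setIntegral_congr_fun measurableSet_Ioo hintegrand, integral_const_mul,
    integral_Ioo_zero_one_comp_rpow (fun u => u ^ (a - 1) * (1 - u) ^ (b - 1)) hp,
    ← integral_Ioc_eq_integral_Ioo, ← intervalIntegral.integral_of_le zero_le_one,
    integral_rpow_mul_one_sub_rpow_eq_beta ha hb, inv_mul_eq_div]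

theorem fermat_period_integral_general (N r s : ℕ) (hN : 3 ≤ N) (hr : 0 < r) (hs : 0 < s) :
    ∫ t in (0:ℝ)..1, (t : ℝ) ^ (r - 1) * (1 - t ^ N) ^ ((s : ℝ) / N - 1) =
      Real.Gamma ((r : ℝ) / N) * Real.Gamma ((s : ℝ) / N) /
        (N * Real.Gamma (((r : ℝ) + s) / N)) := by
  have hN0 : (0 : ℝ) < N := Nat.cast_pos.2 (by omega)
  have hexp : (N : ℝ) * (r / N) - 1 = ((r - 1 : ℕ) : ℝ) := by
    rw [Nat.cast_pred hr]
    field_simp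
  have key := integral_rpow_mul_one_sub_rpow_rpow_eq_beta_div hN0
    (div_pos (Nat.cast_pos.2 hr) hN0) (div_pos (Nat.cast_pos.2 hs) hN0)
  simp only [hexp, rpow_natCast] at key
  rw [key, ProbabilityTheory.beta, add_div, div_div, mul_comm (Real.Gamma _) (N : ℝ)]

/-- The period integral of the 1-form `ω'_{r,s} = x^{r-1} y^{s-1} dx / y^{N-1}` on the
Fermat curve along `γ₀` equals `B(r/N, s/N)/N`. -/
theorem fermat_period_integral (N r s : ℕ) (hN : 3 ≤ N) (hr : 0 < r) (hs : 0 < s)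
    (hrs : r + s ≤ N - 1) :
    ∫ t in (0:ℝ)..1, (t : ℝ) ^ (r - 1) * (1 - t ^ N) ^ ((s : ℝ) / N - 1) =
      Real.Gamma ((r : ℝ) / N) * Real.Gamma ((s : ℝ) / N) /
        (N * Real.Gamma (((r : ℝ) + s) / N)) :=
  fermat_period_integral_general N r s hN hr hs
end

section
/- Let a ∈ (0, ∞) and b ∈ (0, 1) be real numbers, and let v ∈ (0, 1]. Then ∫₀^v u^{a-1} (1-u)^{b-1} du = Σ_{n=0}^∞ [(1-b, n) / (1, n)] · v^{a+n} / (a+n), where the series on the right converges. -/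
/-!
For `0 < u < 1` the binomial series `(1 - u)^(b-1) = Σ (1-b, n)/n! · uⁿ` has nonnegative
coefficients because `b < 1`. Multiplying by `u^(a-1)` and integrating term by term is then
justified by dominated convergence, with the series itself as dominating function: its sum is
the Beta integrand, which is integrable for `a, b > 0`.
-/

open MeasureTheory Real Polynomial Set
open scoped Nat

theorem Ring.choose_add_sub_one_eq_ascPochhammer_div {K : Type*} [Field K] [CharZero K]
    (a : K) (n : ℕ) : Ring.choose (a + n - 1) n = (ascPochhammer K n).eval a / n ! := by
  rw [← Ring.multichoose_eq, eq_div_iff (Nat.cast_ne_zero.2 n.factorial_ne_zero), mul_comm,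
    ← nsmul_eq_mul, Ring.factorial_nsmul_multichoose_eq_ascPochhammer,
    ascPochhammer_smeval_eq_eval]

theorem hasSum_ascPochhammer_div_factorial_mul_pow (a : ℝ) {x : ℝ} (hx : |x| < 1) :
    HasSum (fun n : ℕ => (ascPochhammer ℝ n).eval a / n ! * x ^ n) ((1 - x) ^ (-a)) := by
  have h := (one_div_one_sub_rpow_hasFPowerSeriesOnBall_zero a).hasSum
    (y := x) (by simpa [enorm_eq_nnnorm, ← NNReal.coe_lt_coe] using hx)
  simp only [FormalMultilinearSeries.ofScalars_apply_eq, zero_add, smul_eq_mul,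
    Ring.choose_add_sub_one_eq_ascPochhammer_div] at h
  rwa [rpow_neg (by linarith [le_abs_self x]), inv_eq_one_div]

theorem integral_Ioo_rpow_sub_one {s v : ℝ} (hs : 0 < s) (hv : 0 ≤ v) :
    ∫ u in Ioo 0 v, u ^ (s - 1) = v ^ s / s := by
  rw [← integral_Ioc_eq_integral_Ioo, ← intervalIntegral.integral_of_le hv,
    integral_rpow (Or.inl (by linarith)), sub_add_cancel, zero_rpow hs.ne']
  ring

theorem hasSum_integral_rpow_mul_of_hasSum_pow {a v : ℝ} {c : ℕ → ℝ} {f : ℝ → ℝ}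
    (ha : 0 < a) (hv : 0 ≤ v) (hc : ∀ n, 0 ≤ c n)
    (hf : ∀ u ∈ Ioo 0 v, HasSum (fun n => c n * u ^ n) (f u))
    (hint : IntegrableOn (fun u => u ^ (a - 1) * f u) (Ioo 0 v)) :
    HasSum (fun n : ℕ => c n * v ^ (a + n) / (a + n)) (∫ u in Ioo 0 v, u ^ (a - 1) * f u) := by
  set F : ℕ → ℝ → ℝ := fun n u => c n * u ^ (a + n - 1)
  have hF : ∀ u ∈ Ioo 0 v, HasSum (fun n => F n u) (u ^ (a - 1) * f u) := by
    intro u hu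
    refine ((hf u hu).mul_left (u ^ (a - 1))).congr_fun fun n => ?_
    simp only [F]
    rw [add_sub_right_comm, rpow_add hu.1, rpow_natCast]
    ring
  have hF_nonneg : ∀ n, ∀ u ∈ Ioo 0 v, 0 ≤ F n u := fun n u hu =>
    mul_nonneg (hc n) (rpow_nonneg hu.1.le _)
  have hF_integral : ∀ n, ∫ u in Ioo 0 v, F n u = c n * v ^ (a + n) / (a + n) := fun n => by
    rw [integral_const_mul, integral_Ioo_rpow_sub_one (by positivity) hv, mul_div_assoc]
  simp only [← hF_integral]
  refine hasSum_integral_of_dominated_convergence F (fun n => by fun_prop)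
    (fun n => ?_) ?_ ?_ ?_
  · exact ae_restrict_of_forall_mem measurableSet_Ioo fun u hu =>
      (Real.norm_of_nonneg (hF_nonneg n u hu)).le
  · exact ae_restrict_of_forall_mem measurableSet_Ioo fun u hu => (hF u hu).summable
  · exact hint.congr_fun (fun u hu => (hF u hu).tsum_eq.symm) measurableSet_Ioo
  · exact ae_restrict_of_forall_mem measurableSet_Ioo hF

theorem integrableOn_rpow_mul_one_sub_rpow {a b : ℝ} (ha : 0 < a) (hb : 0 < b) :
    IntegrableOn (fun u : ℝ => u ^ (a - 1) * (1 - u) ^ (b - 1)) (Ioo 0 1) := by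
  have h := (Complex.betaIntegral_convergent (u := a) (v := b) (by simpa) (by simpa)).norm
  rw [intervalIntegrable_iff_integrableOn_Ioo_of_le zero_le_one] at h
  refine h.congr_fun (fun u hu => ?_) measurableSet_Ioo
  have h1u : (1 - (u : ℂ)) = ((1 - u : ℝ) : ℂ) := by push_cast; ring
  dsimp only
  rw [norm_mul, h1u, Complex.norm_cpow_eq_rpow_re_of_pos hu.1,
    Complex.norm_cpow_eq_rpow_re_of_pos (sub_pos.2 hu.2)]
  simp

/-- Expanding `(1-u)^{b-1}` by the binomial series and integrating term by term:
`∫₀^v u^{a-1}(1-u)^{b-1} du = Σ_{n} ((1-b,n)/(1,n)) v^{a+n}/(a+n)`, where `(α,n)` is the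
ascending Pochhammer symbol, and the series converges. -/
theorem incomplete_beta_series (a b v : ℝ) (ha : 0 < a) (hb0 : 0 < b) (hb1 : b < 1)
    (hv0 : 0 < v) (hv1 : v ≤ 1) :
    Summable (fun n : ℕ =>
      ((ascPochhammer ℝ n).eval (1 - b) / (ascPochhammer ℝ n).eval 1) *
        v ^ (a + n) / (a + n)) ∧
    ∫ u in (0:ℝ)..v, u ^ (a - 1) * (1 - u) ^ (b - 1) =
      ∑' n : ℕ,
        ((ascPochhammer ℝ n).eval (1 - b) / (ascPochhammer ℝ n).eval 1) *
          v ^ (a + n) / (a + n) := by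
  have hbinom : ∀ u ∈ Ioo 0 v,
      HasSum (fun n : ℕ => (ascPochhammer ℝ n).eval (1 - b) / n ! * u ^ n)
        ((1 - u) ^ (b - 1)) := fun u hu => by
    simpa using hasSum_ascPochhammer_div_factorial_mul_pow (1 - b)
      (abs_lt.2 ⟨by linarith [hu.1], hu.2.trans_le hv1⟩)
  have hsum := hasSum_integral_rpow_mul_of_hasSum_pow ha hv0.le
    (fun n => div_nonneg (ascPochhammer_pos n _ (sub_pos.2 hb1)).le (by positivity))
    hbinom ((integrableOn_rpow_mul_one_sub_rpow ha hb0).mono_set (Ioo_subset_Ioo_right hv1))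
  simp only [ascPochhammer_eval_one]
  rw [intervalIntegral.integral_of_le hv0.le, integral_Ioc_eq_integral_Ioo]
  exact ⟨hsum.summable, hsum.tsum_eq.symm⟩
end
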